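/- Let ω(A) = Tr(A·R) be the linear functional with density matrix R = Σ_{𝔍,𝔍'∈𝒫₊} r_{𝔍𝔍'}·Θ(C_𝔍)∘C_{𝔍'}. Then ω is reflection positive on 𝔄₊ (i.e. 0 ≤ ω(Θ(A)∘A) for all A ∈ 𝔄₊) if and only if the matrix (r_{𝔍𝔍'})_{𝔍,𝔍'∈𝒫₊} is positive semidefinite. -/

import Mathlib

open ComplexOrder

noncomputable section

/-- The setting of the paper: a finite set `Λ` with a fixed-point free involution `ϑ`
exchanging `Λp` and its complement, the Clifford algebra (algebra of Majoranas) `carrier`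
with self-adjoint generators `c i`, the global gauge automorphism `gauge`, the antilinear
reflection `*`-automorphism `Θ`, a square root `ζ` of `-1`, the twisted product `twist`,
a choice `P` of orderings of the subsets of `Λp` (giving the bases
`{C J : J ∈ P}` of `𝔄₊` and `{Θ(C J) ∘ C J' : J, J' ∈ P}` of `𝔄`),
and the tracial state `Tr` picking out the coefficient of `1` in the basis expansion. -/
structure MajoranaSetting where
  Λ : Type
  [fintypeΛ : Fintype Λ]
  [deceqΛ : DecidableEq Λ]
  ϑ : Λ → Λ
  ϑ_invol : Function.Involutive ϑ
  ϑ_fixfree : ∀ i, ϑ i ≠ i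
  Λp : Finset Λ
  ϑ_exch : ∀ i, i ∈ Λp ↔ ϑ i ∉ Λp
  carrier : Type
  [nring : NormedRing carrier]
  [nalg : NormedAlgebra ℂ carrier]
  [cmpl : CompleteSpace carrier]
  [starring : StarRing carrier]
  [starmod : StarModule ℂ carrier]
  c : Λ → carrier
  c_star : ∀ i, star (c i) = c i
  clifford : ∀ i j, c i * c j + c j * c i = if i = j then (2 : carrier) else 0
  gauge : carrier ≃ₐ[ℂ] carrier
  gauge_c : ∀ i, gauge (c i) = - c i
  Θ : carrier → carrier
  Θ_add : ∀ x y, Θ (x + y) = Θ x + Θ y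
  Θ_smul : ∀ (z : ℂ) (x), Θ (z • x) = (starRingEnd ℂ z) • Θ x
  Θ_mul : ∀ x y, Θ (x * y) = Θ x * Θ y
  Θ_star : ∀ x, Θ (star x) = star (Θ x)
  Θ_invol : ∀ x, Θ (Θ x) = x
  Θ_c : ∀ i, Θ (c i) = c (ϑ i)
  ζ : ℂ
  ζ_sq : ζ ^ 2 = -1
  twist : carrier → carrier → carrier
  twist_add_left : ∀ x x' y, twist (x + x') y = twist x y + twist x' y
  twist_add_right : ∀ x y y', twist x (y + y') = twist x y + twist x y'
  twist_smul_left : ∀ (z : ℂ) (x y), twist (z • x) y = z • twist x y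
  twist_smul_right : ∀ (z : ℂ) (x y), twist x (z • y) = z • twist x y
  twist_spec : ∀ (Am Ap Bm Bp : carrier) (a b a' b' : ℕ),
    a ≤ 1 → b ≤ 1 → a' ≤ 1 → b' ≤ 1 →
    Am ∈ Algebra.adjoin ℂ (c '' {i | i ∉ Λp}) →
    Ap ∈ Algebra.adjoin ℂ (c '' {i | i ∈ Λp}) →
    Bm ∈ Algebra.adjoin ℂ (c '' {i | i ∉ Λp}) →
    Bp ∈ Algebra.adjoin ℂ (c '' {i | i ∈ Λp}) →
    gauge Am = ((-1 : ℂ) ^ a) • Am →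
    gauge Ap = ((-1 : ℂ) ^ b) • Ap →
    gauge Bm = ((-1 : ℂ) ^ a') • Bm →
    gauge Bp = ((-1 : ℂ) ^ b') • Bp →
    twist (Am * Ap) (Bm * Bp)
      = ζ ^ ((a * b' : ℤ) - (b * a' : ℤ)) • (Am * Ap * (Bm * Bp))
  P : Finset (List Λ)
  P_nodup : ∀ J ∈ P, J.Nodup
  P_sub : ∀ J ∈ P, ∀ i ∈ J, i ∈ Λp
  P_unique : ∀ s : Finset Λ, s ⊆ Λp → ∃! J, J ∈ P ∧ J.toFinset = s
  Tr : carrier →ₗ[ℂ] ℂ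
  Tr_basis : ∀ J ∈ P, ∀ J' ∈ P,
    Tr (twist (Θ ((J.map c).prod)) ((J'.map c).prod))
      = if J = [] ∧ J' = [] then 1 else 0
  basis_indep : LinearIndependent ℂ
    (fun p : {J // J ∈ P} × {J // J ∈ P} =>
      twist (Θ ((p.1.1.map c).prod)) ((p.2.1.map c).prod))
  basis_span : ∀ x : carrier, x ∈ Submodule.span ℂ
    (Set.range fun p : {J // J ∈ P} × {J // J ∈ P} =>
      twist (Θ ((p.1.1.map c).prod)) ((p.2.1.map c).prod))
  plus_span : ∀ x ∈ Algebra.adjoin ℂ (c '' {i | i ∈ Λp}),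
    x ∈ Submodule.span ℂ (Set.range fun J : {J // J ∈ P} => ((J.1.map c).prod))

attribute [instance] MajoranaSetting.fintypeΛ MajoranaSetting.deceqΛ
  MajoranaSetting.nring MajoranaSetting.nalg MajoranaSetting.cmpl
  MajoranaSetting.starring MajoranaSetting.starmod

namespace MajoranaSetting

variable (S : MajoranaSetting)

/-- The subalgebra `𝔄₊` generated by the Majoranas on the `+` side. -/
def Aplus : Subalgebra ℂ S.carrier := Algebra.adjoin ℂ (S.c '' {i | i ∈ S.Λp})

/-- The subalgebra `𝔄₋` generated by the Majoranas on the `-` side. -/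
def Aminus : Subalgebra ℂ S.carrier := Algebra.adjoin ℂ (S.c '' {i | i ∉ S.Λp})

/-- The monomial `C_𝔍 = c_{i₁} ⋯ c_{i_k}`. -/
def C (J : List S.Λ) : S.carrier := (J.map S.c).prod

/-- `q_𝔍 = (-1)^{k(k-1)/2}`. -/
def q (J : List S.Λ) : ℂ := (-1 : ℂ) ^ (J.length * (J.length - 1) / 2)

/-- `s_𝔍 = ζ^{k(k-1)/2}`. -/
def sgn (J : List S.Λ) : ℂ := S.ζ ^ (J.length * (J.length - 1) / 2)

/-- The exponential `e^x` in the (finite-dimensional) algebra `𝔄`. -/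
def expm (x : S.carrier) : S.carrier := NormedSpace.exp x

/-- The Hamiltonian `H = -∑_{𝔍,𝔍' ∈ 𝒫₊} J_{𝔍𝔍'} Θ(C_𝔍) ∘ C_𝔍'`
determined by coupling constants `Jc`. -/
def Ham (Jc : List S.Λ → List S.Λ → ℂ) : S.carrier :=
  - ∑ J ∈ S.P, ∑ J' ∈ S.P, Jc J J' • S.twist (S.Θ (S.C J)) (S.C J')

/-- The index type of the basis `{C J : J ∈ 𝒫₊}`. -/
abbrev PIdx := {J : List S.Λ // J ∈ S.P}

/-- The index type `𝒫₊ - {∅}` of couplings across the reflection plane. -/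
abbrev PIdx0 := {p : S.PIdx // p.1 ≠ []}

/-- The full matrix of coupling constants. -/
def Jmat (Jc : List S.Λ → List S.Λ → ℂ) : Matrix S.PIdx S.PIdx ℂ :=
  Matrix.of fun p q => Jc p.1 q.1

/-- The matrix `J⁰` of coupling constants across the reflection plane. -/
def Jmat0 (Jc : List S.Λ → List S.Λ → ℂ) : Matrix S.PIdx0 S.PIdx0 ℂ :=
  Matrix.of fun p q => Jc p.1.1 q.1.1

end MajoranaSetting

/-!
The elements `b_{𝔍𝔍'} = Θ(C_𝔍) ∘ C_𝔍'` are orthogonal for `(x, y) ↦ Tr(x y)`: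
`Tr(b_{𝔍𝔍'} b_{𝔎𝔎'}) = δ_{𝔍𝔎} δ_{𝔍'𝔎'} q_𝔍 q_𝔍'`. Indeed, up to a sign, `b_{𝔍𝔍'} b_{𝔎𝔎'}` is
`Θ(C_𝔍 C_𝔎) C_𝔍' C_𝔎'`, and `C_𝔍 C_𝔎` is `±` the basis monomial on the symmetric difference of
`𝔍` and `𝔎`, so the trace vanishes unless `𝔍 = 𝔎` and `𝔍' = 𝔎'`; in that case the two twist phases
`ζ^{…}` cancel the sign from moving `C_𝔍'` past `Θ(C_𝔍)`. Hence for `A = ∑ a_𝔍 C_𝔍` one gets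
`Tr(Θ(A) ∘ A · R) = ⟨v, r v⟩` with `v_𝔍 = q_𝔍 a_𝔍`. As `q_𝔍 = ±1`, `v` ranges over all vectors, and
over `ℂ` a nonnegative quadratic form is that of a Hermitian, hence positive semidefinite, matrix.
-/

open Matrix

theorem Matrix.posSemidef_of_dotProduct_mulVec_nonneg_complex {n : Type*} [Fintype n]
    {M : Matrix n n ℂ} (h : ∀ x, 0 ≤ star x ⬝ᵥ (M *ᵥ x)) : M.PosSemidef := by
  classical
  rw [← isPositive_toEuclideanLin_iff, LinearMap.isPositive_iff_complex]
  intro x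
  have hx := h x.ofLp
  have hinner : inner ℂ (M.toEuclideanLin x) x = star (star x.ofLp ⬝ᵥ (M *ᵥ x.ofLp)) := by
    rw [← inner_conj_symm, EuclideanSpace.inner_eq_star_dotProduct, dotProduct_comm]
    simp [Matrix.ofLp_toLpLin]
  rw [Complex.nonneg_iff] at hx
  rw [hinner]
  refine ⟨?_, ?_⟩ <;> simp [Complex.ext_iff, ← hx.2, hx.1]

lemma neg_one_pow_triangle_succ (n : ℕ) :
    (-1 : ℂ) ^ n * (-1 : ℂ) ^ (n * (n - 1) / 2) = (-1 : ℂ) ^ ((n + 1) * (n + 1 - 1) / 2) := by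
  rw [← pow_add, add_comm, ← Nat.triangle_succ]

namespace MajoranaSetting

variable (S : MajoranaSetting)

lemma c_mul_self (i : S.Λ) : S.c i * S.c i = 1 := by
  have h := S.clifford i i
  rw [if_pos rfl] at h
  refine smul_right_injective S.carrier (two_ne_zero (α := ℂ)) ?_
  simp only [two_smul, h, one_add_one_eq_two]

lemma c_mul_c_of_ne {i j : S.Λ} (h : i ≠ j) : S.c i * S.c j = -(S.c j * S.c i) :=
  eq_neg_of_add_eq_zero_left ((S.clifford i j).trans (if_neg h))

@[simp] lemma C_nil : S.C [] = 1 := rfl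

@[simp] lemma C_cons (i : S.Λ) (J : List S.Λ) : S.C (i :: J) = S.c i * S.C J :=
  List.prod_cons

lemma C_mem_adjoin {s : Set S.Λ} {J : List S.Λ} (h : ∀ i ∈ J, i ∈ s) :
    S.C J ∈ Algebra.adjoin ℂ (S.c '' s) := by
  induction J with
  | nil => exact one_mem _
  | cons i T ih =>
    rw [C_cons]
    exact mul_mem (Algebra.subset_adjoin ⟨i, h i (by simp), rfl⟩)
      (ih fun j hj => h j (by simp [hj]))

lemma c_mul_C_of_notMem {i : S.Λ} {T : List S.Λ} (h : i ∉ T) :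
    S.c i * S.C T = (-1 : ℂ) ^ T.length • (S.C T * S.c i) := by
  induction T with
  | nil => simp
  | cons j T ih =>
    rw [List.mem_cons, not_or] at h
    rw [C_cons, ← mul_assoc, S.c_mul_c_of_ne h.1, neg_mul, mul_assoc, ih h.2]
    simp [pow_succ, mul_assoc]

lemma C_mul_c_of_notMem {i : S.Λ} {T : List S.Λ} (h : i ∉ T) :
    S.C T * S.c i = (-1 : ℂ) ^ T.length • (S.c i * S.C T) := by
  rw [S.c_mul_C_of_notMem h, smul_smul, ← pow_add, Even.neg_one_pow ⟨_, rfl⟩, one_smul]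

lemma C_mul_C_of_disjoint {J K : List S.Λ} (h : J.Disjoint K) :
    S.C J * S.C K = (-1 : ℂ) ^ (J.length * K.length) • (S.C K * S.C J) := by
  induction J with
  | nil => simp
  | cons i T ih =>
    rw [List.disjoint_cons_left] at h
    rw [C_cons, mul_assoc, ih h.2, mul_smul_comm, ← mul_assoc, S.c_mul_C_of_notMem h.1,
      smul_mul_assoc, smul_smul, mul_assoc, ← C_cons, ← pow_add, List.length_cons]
    ring_nf

lemma C_mul_self_of_nodup {J : List S.Λ} (h : J.Nodup) : S.C J * S.C J = S.q J • 1 := by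
  induction J with
  | nil => simp [q]
  | cons i T ih =>
    rw [List.nodup_cons] at h
    calc S.C (i :: T) * S.C (i :: T) = S.c i * (S.C T * S.c i) * S.C T := by simp [mul_assoc]
      _ = (-1 : ℂ) ^ T.length • (S.C T * S.C T) := by
        rw [S.C_mul_c_of_notMem h.1, mul_smul_comm, smul_mul_assoc, ← mul_assoc,
          c_mul_self, one_mul]
      _ = S.q (i :: T) • 1 := by
        rw [ih h.2, smul_smul, q, q, List.length_cons, neg_one_pow_triangle_succ]

lemma c_mul_C_of_mem {i : S.Λ} {L : List S.Λ} (hL : L.Nodup) (hi : i ∈ L) :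
    ∃ n : ℕ, S.c i * S.C L = (-1 : ℂ) ^ n • S.C (L.erase i) := by
  induction L with
  | nil => simp at hi
  | cons j T ih =>
    by_cases hij : i = j
    · subst hij
      exact ⟨0, by rw [List.erase_cons_head, C_cons, ← mul_assoc, c_mul_self, one_mul, pow_zero,
        one_smul]⟩
    · obtain ⟨n, hn⟩ := ih (List.nodup_cons.mp hL).2 ((List.mem_cons.mp hi).resolve_left hij)
      refine ⟨n + 1, ?_⟩
      rw [List.erase_cons_tail (by simpa using Ne.symm hij), C_cons, C_cons, ← mul_assoc,
        S.c_mul_c_of_ne hij, neg_mul, mul_assoc, hn]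
      simp [pow_succ]

lemma C_eq_of_perm {J L : List S.Λ} (h : J.Perm L) : ∃ n : ℕ, S.C J = (-1 : ℂ) ^ n • S.C L := by
  induction h with
  | nil => exact ⟨0, by simp⟩
  | cons x _ ih =>
    obtain ⟨n, hn⟩ := ih
    exact ⟨n, by rw [C_cons, hn, C_cons, mul_smul_comm]⟩
  | swap x y l =>
    by_cases hxy : x = y
    · exact ⟨0, by simp [hxy]⟩
    · exact ⟨1, by simp [← mul_assoc, S.c_mul_c_of_ne (Ne.symm hxy)]⟩
  | trans _ _ ih₁ ih₂ =>
    obtain ⟨m, hm⟩ := ih₁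
    obtain ⟨n, hn⟩ := ih₂
    exact ⟨m + n, by rw [hm, hn, smul_smul, pow_add]⟩

lemma exists_C_mul_C_eq_nodup {J K : List S.Λ} (hJ : J.Nodup) (hK : K.Nodup) :
    ∃ (n : ℕ) (L : List S.Λ), L.Nodup ∧ L.toFinset = symmDiff J.toFinset K.toFinset ∧
      S.C J * S.C K = (-1 : ℂ) ^ n • S.C L := by
  induction J with
  | nil => exact ⟨0, K, hK, by simp [← Finset.bot_eq_empty], by simp⟩
  | cons i T ih =>
    rw [List.nodup_cons] at hJ
    obtain ⟨n, L, hL, hLT, hTK⟩ := ih hJ.2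
    have hiL : i ∈ L ↔ i ∈ K := by
      rw [← List.mem_toFinset, hLT, Finset.mem_symmDiff]
      simp [hJ.1]
    by_cases hi : i ∈ L
    · obtain ⟨m, hm⟩ := S.c_mul_C_of_mem hL hi
      refine ⟨n + m, L.erase i, hL.erase i, ?_, ?_⟩
      · ext x
        rw [List.mem_toFinset, hL.mem_erase_iff, ← List.mem_toFinset, hLT]
        by_cases hx : x = i <;> simp [Finset.mem_symmDiff, hx, hJ.1, hiL.mp hi]
      · rw [C_cons, mul_assoc, hTK, mul_smul_comm, hm, smul_smul, pow_add]
    · refine ⟨n, i :: L, List.nodup_cons.mpr ⟨hi, hL⟩, ?_, ?_⟩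
      · ext x
        rw [List.toFinset_cons, Finset.mem_insert, hLT]
        by_cases hx : x = i <;> simp [Finset.mem_symmDiff, hx, hJ.1, hiL.not.mp hi]
      · rw [C_cons, mul_assoc, hTK, mul_smul_comm, C_cons]

lemma nil_mem_P : [] ∈ S.P := by
  obtain ⟨J, ⟨hJP, hJ⟩, -⟩ := S.P_unique ∅ (Finset.empty_subset _)
  rwa [(List.toFinset_eq_empty_iff _).mp hJ] at hJP

lemma eq_of_toFinset_eq {J K : List S.Λ} (hJ : J ∈ S.P) (hK : K ∈ S.P)
    (h : J.toFinset = K.toFinset) : J = K :=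
  (S.P_unique K.toFinset fun i hi => S.P_sub K hK i (List.mem_toFinset.mp hi)).unique ⟨hJ, h⟩
    ⟨hK, rfl⟩

lemma exists_C_mul_C_eq_of_mem_P {J K : List S.Λ} (hJ : J ∈ S.P) (hK : K ∈ S.P) :
    ∃ (n : ℕ) (L : List S.Λ), L ∈ S.P ∧ (L = [] → J = K) ∧
      S.C J * S.C K = (-1 : ℂ) ^ n • S.C L := by
  obtain ⟨m, L₀, hL₀, hL₀JK, hJK⟩ := S.exists_C_mul_C_eq_nodup (S.P_nodup J hJ) (S.P_nodup K hK)
  have hL₀sub : L₀.toFinset ⊆ S.Λp := by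
    rw [hL₀JK]
    refine symmDiff_le_sup.trans (Finset.union_subset ?_ ?_) <;> intro i hi
    exacts [S.P_sub J hJ i (List.mem_toFinset.mp hi), S.P_sub K hK i (List.mem_toFinset.mp hi)]
  obtain ⟨L, ⟨hLP, hLL₀⟩, -⟩ := S.P_unique L₀.toFinset hL₀sub
  obtain ⟨n, hn⟩ := S.C_eq_of_perm (List.perm_of_nodup_nodup_toFinset_eq hL₀ (S.P_nodup L hLP)
    hLL₀.symm)
  refine ⟨m + n, L, hLP, fun hL => S.eq_of_toFinset_eq hJ hK ?_, ?_⟩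
  · rw [← symmDiff_eq_bot, ← hL₀JK, ← hLL₀, hL]
    rfl
  · rw [hJK, hn, smul_smul, pow_add]

def Θₛₗ : S.carrier →ₗ⋆[ℂ] S.carrier where
  toFun := S.Θ
  map_add' := S.Θ_add
  map_smul' := S.Θ_smul

def twistₗ : S.carrier →ₗ[ℂ] S.carrier →ₗ[ℂ] S.carrier :=
  LinearMap.mk₂ ℂ S.twist S.twist_add_left S.twist_smul_left S.twist_add_right
    S.twist_smul_right

lemma Θ_one : S.Θ 1 = 1 := by
  simpa [S.Θ_invol] using (S.Θ_mul 1 (S.Θ 1)).symm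

lemma Θ_C (J : List S.Λ) : S.Θ (S.C J) = S.C (J.map S.ϑ) := by
  induction J with
  | nil => exact S.Θ_one
  | cons i T ih => rw [C_cons, S.Θ_mul, S.Θ_c, ih, List.map_cons, C_cons]

lemma Θ_neg_one_pow_smul (n : ℕ) (x : S.carrier) :
    S.Θ ((-1 : ℂ) ^ n • x) = (-1 : ℂ) ^ n • S.Θ x := by
  simp [S.Θ_smul]

lemma gauge_C (J : List S.Λ) : S.gauge (S.C J) = (-1 : ℂ) ^ J.length • S.C J := by
  induction J with
  | nil => simp
  | cons i T ih => simp [S.gauge_c, ih, pow_succ]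

lemma twist_Θ_C_C {J J' : List S.Λ} (hJ : ∀ i ∈ J, i ∈ S.Λp) (hJ' : ∀ i ∈ J', i ∈ S.Λp) :
    S.twist (S.Θ (S.C J)) (S.C J')
      = S.ζ ^ (J.length % 2 * (J'.length % 2)) • (S.Θ (S.C J) * S.C J') := by
  have hΘJ : S.Θ (S.C J) ∈ Algebra.adjoin ℂ (S.c '' {i | i ∉ S.Λp}) := by
    rw [Θ_C]
    refine S.C_mem_adjoin fun i hi => ?_
    obtain ⟨j, hj, rfl⟩ := List.mem_map.mp hi
    exact (S.ϑ_exch j).mp (hJ j hj)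
  have h := S.twist_spec (S.Θ (S.C J)) 1 1 (S.C J') (J.length % 2) 0 0 (J'.length % 2)
    (Nat.le_of_lt_succ (Nat.mod_lt _ two_pos)) zero_le_one zero_le_one
    (Nat.le_of_lt_succ (Nat.mod_lt _ two_pos)) hΘJ (one_mem _) (one_mem _) (S.C_mem_adjoin hJ')
    (by rw [Θ_C, gauge_C, ← Θ_C, List.length_map, neg_one_pow_eq_pow_mod_two])
    (by simp) (by simp) (by rw [gauge_C, neg_one_pow_eq_pow_mod_two])
  rw [mul_one, one_mul] at h
  rw [h, ← zpow_natCast]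
  norm_num

lemma ζ_ne_zero : S.ζ ≠ 0 := by
  rintro h
  simpa [h] using S.ζ_sq

lemma ζ_pow_mul_ζ_pow_mul_neg_one_pow (a b : ℕ) :
    S.ζ ^ (a % 2 * (b % 2)) * S.ζ ^ (a % 2 * (b % 2)) * (-1 : ℂ) ^ (b * a) = 1 := by
  rw [← pow_add, ← two_mul, pow_mul, S.ζ_sq, ← pow_add]
  refine Even.neg_one_pow ?_
  rw [Nat.even_add, Nat.even_mul, Nat.even_mul, Nat.even_iff, Nat.even_iff, Nat.mod_mod,
    Nat.mod_mod, Nat.even_iff, Nat.even_iff]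
  tauto

lemma Tr_Θ_C_mul_C {L L' : List S.Λ} (hL : L ∈ S.P) (hL' : L' ∈ S.P) :
    S.Tr (S.Θ (S.C L) * S.C L') = if L = [] ∧ L' = [] then 1 else 0 := by
  have hb : S.Tr (S.twist (S.Θ (S.C L)) (S.C L')) = _ := S.Tr_basis L hL L' hL'
  rw [S.twist_Θ_C_C (S.P_sub L hL) (S.P_sub L' hL'), map_smul, smul_eq_mul] at hb
  split_ifs at hb ⊢ with h
  · obtain ⟨rfl, rfl⟩ := h
    simpa using hb
  · exact (mul_eq_zero.mp hb).resolve_left (pow_ne_zero _ S.ζ_ne_zero)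

lemma Tr_one : S.Tr 1 = 1 := by
  simpa [S.Θ_one] using S.Tr_Θ_C_mul_C S.nil_mem_P S.nil_mem_P

lemma Θ_C_mul_C_mul_Θ_C_mul_C {J J' K K' : List S.Λ} (hJ' : ∀ i ∈ J', i ∈ S.Λp)
    (hK : ∀ i ∈ K, i ∈ S.Λp) :
    S.Θ (S.C J) * S.C J' * (S.Θ (S.C K) * S.C K')
      = (-1 : ℂ) ^ (J'.length * K.length) • (S.Θ (S.C J * S.C K) * (S.C J' * S.C K')) := by
  have hdisj : J'.Disjoint (K.map S.ϑ) := by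
    intro i hiJ' hiK
    obtain ⟨k, hk, rfl⟩ := List.mem_map.mp hiK
    exact (S.ϑ_exch k).mp (hK k hk) (hJ' _ hiJ')
  have hswap := S.C_mul_C_of_disjoint hdisj
  rw [← Θ_C, List.length_map] at hswap
  rw [S.Θ_mul, mul_assoc, ← mul_assoc (S.C J'), hswap, smul_mul_assoc, mul_smul_comm]
  simp only [mul_assoc]

@[simp] lemma conj_q (J : List S.Λ) : starRingEnd ℂ (S.q J) = S.q J := by
  simp [q]

lemma q_mul_self (J : List S.Λ) : S.q J * S.q J = 1 := by
  rw [q, ← pow_add, Even.neg_one_pow ⟨_, rfl⟩]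

lemma Tr_twist_mul_twist {J J' K K' : List S.Λ}
    (hJ : J ∈ S.P) (hJ' : J' ∈ S.P) (hK : K ∈ S.P) (hK' : K' ∈ S.P) :
    S.Tr (S.twist (S.Θ (S.C J)) (S.C J') * S.twist (S.Θ (S.C K)) (S.C K'))
      = if J = K ∧ J' = K' then S.q J * S.q J' else 0 := by
  rw [S.twist_Θ_C_C (S.P_sub J hJ) (S.P_sub J' hJ'),
    S.twist_Θ_C_C (S.P_sub K hK) (S.P_sub K' hK'), smul_mul_smul_comm,
    S.Θ_C_mul_C_mul_Θ_C_mul_C (S.P_sub J' hJ') (S.P_sub K hK), smul_smul, map_smul, smul_eq_mul]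
  split_ifs with h
  · obtain ⟨rfl, rfl⟩ := h
    rw [S.C_mul_self_of_nodup (S.P_nodup J hJ), S.C_mul_self_of_nodup (S.P_nodup J' hJ'),
      S.Θ_smul, conj_q, S.Θ_one, smul_mul_smul_comm, one_mul, map_smul, S.Tr_one, smul_eq_mul,
      mul_one, S.ζ_pow_mul_ζ_pow_mul_neg_one_pow, one_mul]
  · obtain ⟨m, L, hL, hLJK, hJK⟩ := S.exists_C_mul_C_eq_of_mem_P hJ hK
    obtain ⟨m', L', hL', hLJK', hJK'⟩ := S.exists_C_mul_C_eq_of_mem_P hJ' hK'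
    rw [hJK, hJK', Θ_neg_one_pow_smul, smul_mul_smul_comm, map_smul, S.Tr_Θ_C_mul_C hL hL',
      if_neg fun hLL' => h ⟨hLJK hLL'.1, hLJK' hLL'.2⟩, smul_zero, mul_zero]

lemma Tr_twist_mul_twist_of_PIdx (p p' s s' : S.PIdx) :
    S.Tr (S.twist (S.Θ (S.C p.1)) (S.C p'.1) * S.twist (S.Θ (S.C s.1)) (S.C s'.1))
      = if p = s ∧ p' = s' then S.q p.1 * S.q p'.1 else 0 := by
  simp only [S.Tr_twist_mul_twist p.2 p'.2 s.2 s'.2, Subtype.ext_iff]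

lemma Tr_twist_Θ_mul_eq_dotProduct (r : List S.Λ → List S.Λ → ℂ) (a : S.PIdx → ℂ) :
    S.Tr (S.twist (S.Θ (∑ p, a p • S.C p.1)) (∑ p, a p • S.C p.1) *
        ∑ J ∈ S.P, ∑ J' ∈ S.P, r J J' • S.twist (S.Θ (S.C J)) (S.C J'))
      = star (fun p => S.q p.1 * a p) ⬝ᵥ
          (Matrix.of (fun p q : S.PIdx => r p.1 q.1) *ᵥ fun p => S.q p.1 * a p) := by
  have hR : ∑ J ∈ S.P, ∑ J' ∈ S.P, r J J' • S.twist (S.Θ (S.C J)) (S.C J')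
      = ∑ s : S.PIdx, ∑ s' : S.PIdx, r s.1 s'.1 • S.twist (S.Θ (S.C s.1)) (S.C s'.1) := by
    simp only [← Finset.sum_coe_sort S.P]
  have hA : S.twist (S.Θ (∑ p, a p • S.C p.1)) (∑ p, a p • S.C p.1)
      = ∑ p : S.PIdx, ∑ p' : S.PIdx,
          (starRingEnd ℂ (a p) * a p') • S.twist (S.Θ (S.C p.1)) (S.C p'.1) := by
    change S.twistₗ (S.Θₛₗ _) _ = _
    simp only [map_sum, LinearMap.map_smulₛₗ, LinearMap.sum_apply, LinearMap.smul_apply,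
      RingHom.id_apply, Finset.smul_sum, smul_smul]
    rw [Finset.sum_comm]
    simp only [mul_comm (a _)]
    rfl
  rw [hR, hA]
  simp only [Finset.sum_mul, Finset.mul_sum, smul_mul_smul_comm, map_sum, map_smul,
    Tr_twist_mul_twist_of_PIdx, smul_eq_mul, mul_ite, mul_zero]
  simp only [ite_and, Finset.sum_ite_irrel, Finset.sum_const_zero, Finset.sum_ite_eq',
    Finset.mem_univ, if_true, dotProduct, mulVec, Pi.star_apply,
    of_apply, Finset.mul_sum, star_mul', RCLike.star_def, conj_q]
  exact Finset.sum_congr rfl fun _ _ => Finset.sum_congr rfl fun _ _ => by ring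

lemma sum_smul_C_mem_Aplus (a : S.PIdx → ℂ) : ∑ p, a p • S.C p.1 ∈ S.Aplus :=
  Subalgebra.sum_mem _ fun p _ => Subalgebra.smul_mem _ (S.C_mem_adjoin (S.P_sub p.1 p.2)) _

lemma exists_eq_sum_smul_C {A : S.carrier} (hA : A ∈ S.Aplus) :
    ∃ a : S.PIdx → ℂ, ∑ p, a p • S.C p.1 = A :=
  (Submodule.mem_span_range_iff_exists_fun ℂ).mp (S.plus_span A hA)

end MajoranaSetting

/-- Basic Reflection Positivity: `ω(A) = Tr(A·R)` with
`R = ∑ r_{𝔍𝔍'} Θ(C_𝔍)∘C_𝔍'` is reflection positive on `𝔄₊` iff the matrix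
`(r_{𝔍𝔍'})` is positive semidefinite. -/
theorem basic_reflection_positivity (S : MajoranaSetting)
    (r : List S.Λ → List S.Λ → ℂ) (R : S.carrier)
    (hR : R = ∑ J ∈ S.P, ∑ J' ∈ S.P, r J J' • S.twist (S.Θ (S.C J)) (S.C J')) :
    (∀ A ∈ S.Aplus, 0 ≤ S.Tr (S.twist (S.Θ A) A * R)) ↔
      (Matrix.of fun p q : S.PIdx => r p.1 q.1).PosSemidef := by
  subst hR
  constructor
  · intro hpos
    refine Matrix.posSemidef_of_dotProduct_mulVec_nonneg_complex fun x => ?_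
    have hx := hpos _ (S.sum_smul_C_mem_Aplus fun p => S.q p.1 * x p)
    simpa only [S.Tr_twist_Θ_mul_eq_dotProduct, ← mul_assoc, S.q_mul_self, one_mul] using hx
  · intro hM A hA
    obtain ⟨a, rfl⟩ := S.exists_eq_sum_smul_C hA
    rw [S.Tr_twist_Θ_mul_eq_dotProduct]
    exact hM.dotProduct_mulVec_nonneg _
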